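/- arXiv:2603.00748 — 7 statements merged into one kernel-verified Lean document; each statement's English description precedes it below -/
import Mathlib

section
/- Let h : ℝ → ℝ be continuous with h(0) = 0, concave on (0, δ) for some δ > 0, and let H(t) = ∫₀ᵗ h(s) ds. Then for any nonnegative reals x₁, x₂ with x₁ + x₂ < δ, one has H(x₁ + x₂) − H(x₁) − H(x₂) − h(x₁)·x₂ ≤ 0. -/
/-!
Concavity on `(0, δ)` passes to `[0, δ)` by continuity at `0`, and a concave function with
`h 0 = 0` is subadditive there. Writing `H (x₁ + x₂) - H x₁ = ∫₀^{x₂} h (x₁ + s) ds` and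
integrating `h (x₁ + s) ≤ h x₁ + h s` over `s ∈ [0, x₂]` gives the claim.
-/

open Set

theorem ConcaveOn.of_subset_closure {E : Type*} [AddCommGroup E] [Module ℝ E]
    [TopologicalSpace E] [ContinuousAdd E] [ContinuousSMul ℝ E] {s t : Set E} {f : E → ℝ}
    (hf : ConcaveOn ℝ s f) (ht : Convex ℝ t) (hst : s ⊆ t) (hts : t ⊆ closure s)
    (hcont : ContinuousOn f t) : ConcaveOn ℝ t f := by
  refine ⟨ht, fun x hx y hy a b ha hb hab => ?_⟩
  have hcomb : ContinuousOn (fun p : E × E => a • p.1 + b • p.2) (t ×ˢ t) := by fun_prop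
  have hmaps : MapsTo (fun p : E × E => a • p.1 + b • p.2) (t ×ˢ t) t :=
    fun p hp => ht hp.1 hp.2 ha hb hab
  have hlhs : ContinuousOn (fun p : E × E => a • f p.1 + b • f p.2) (t ×ˢ t) :=
    ((hcont.comp continuousOn_fst fun p hp => hp.1).const_smul a).add
      ((hcont.comp continuousOn_snd fun p hp => hp.2).const_smul b)
  have hrhs : ContinuousOn (fun p : E × E => f (a • p.1 + b • p.2)) (t ×ˢ t) :=
    hcont.comp hcomb hmaps
  have hxy : (x, y) ∈ closure (s ×ˢ s) := by
    rw [closure_prod_eq]; exact ⟨hts hx, hts hy⟩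
  exact ContinuousWithinAt.closure_le (f := fun p : E × E => a • f p.1 + b • f p.2)
    (g := fun p : E × E => f (a • p.1 + b • p.2)) hxy
    ((hlhs _ ⟨hx, hy⟩).mono (prod_mono hst hst)) ((hrhs _ ⟨hx, hy⟩).mono (prod_mono hst hst))
    fun p hp => hf.2 hp.1 hp.2 ha hb hab

theorem ConcaveOn.map_add_le {s : Set ℝ} {f : ℝ → ℝ} (hf : ConcaveOn ℝ s f) (h0s : 0 ∈ s)
    (hf0 : 0 ≤ f 0) {x y : ℝ} (hx : 0 ≤ x) (hy : 0 ≤ y) (hxys : x + y ∈ s) :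
    f (x + y) ≤ f x + f y := by
  rcases (add_nonneg hx hy).eq_or_lt with hxy | hxy
  · obtain ⟨rfl, rfl⟩ : x = 0 ∧ y = 0 := ⟨by linarith, by linarith⟩
    simpa using hf0
  -- `z = (z / (x + y)) • (x + y) + (1 - z / (x + y)) • 0` for `z = x, y`
  have key : ∀ z, 0 ≤ z → z ≤ x + y → z / (x + y) * f (x + y) ≤ f z := fun z hz hzs => by
    have hw : z / (x + y) ≤ 1 := div_le_one_of_le₀ hzs hxy.le
    have := hf.2 hxys h0s (div_nonneg hz hxy.le) (sub_nonneg.2 hw) (add_sub_cancel _ _)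
    simp only [smul_eq_mul, mul_zero, add_zero, div_mul_cancel₀ _ hxy.ne'] at this
    nlinarith [mul_nonneg (sub_nonneg.2 hw) hf0]
  have hsum : x / (x + y) * f (x + y) + y / (x + y) * f (x + y) = f (x + y) := by
    field_simp
  linarith [key x hx (by linarith), key y hy (by linarith)]

theorem stmt_0_general (h : ℝ → ℝ) (δ : ℝ)
    (hcont : Continuous h) (h0 : h 0 = 0)
    (hconc : ConcaveOn ℝ (Set.Ioo 0 δ) h)
    (H : ℝ → ℝ) (hH : ∀ t, H t = ∫ s in (0:ℝ)..t, h s)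
    (x₁ x₂ : ℝ) (hx₁ : 0 ≤ x₁) (hx₂ : 0 ≤ x₂) (hsum : x₁ + x₂ < δ) :
    H (x₁ + x₂) - H x₁ - H x₂ - h x₁ * x₂ ≤ 0 := by
  have hδ : 0 < δ := by linarith
  have hconc' : ConcaveOn ℝ (Ico 0 δ) h :=
    hconc.of_subset_closure (convex_Ico 0 δ) Ioo_subset_Ico_self
      (closure_Ioo hδ.ne ▸ Ico_subset_Icc_self) hcont.continuousOn
  have hsubadd : ∀ s ∈ Icc 0 x₂, h (x₁ + s) ≤ h x₁ + h s := fun s hs =>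
    hconc'.map_add_le ⟨le_rfl, hδ⟩ h0.ge hx₁ hs.1 ⟨by linarith [hs.1], by linarith [hs.2]⟩
  have hshift : H (x₁ + x₂) - H x₁ = ∫ s in (0:ℝ)..x₂, h (x₁ + s) := by
    rw [hH, hH, intervalIntegral.integral_interval_sub_left (hcont.intervalIntegrable _ _)
      (hcont.intervalIntegrable _ _), intervalIntegral.integral_comp_add_left, add_zero]
  have hbound : (∫ s in (0:ℝ)..x₂, h (x₁ + s)) ≤ ∫ s in (0:ℝ)..x₂, (h x₁ + h s) :=
    intervalIntegral.integral_mono_on hx₂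
      ((by fun_prop : Continuous fun s => h (x₁ + s)).intervalIntegrable _ _)
      ((by fun_prop : Continuous fun s => h x₁ + h s).intervalIntegrable _ _) hsubadd
  rw [intervalIntegral.integral_add intervalIntegrable_const (hcont.intervalIntegrable _ _),
    intervalIntegral.integral_const, smul_eq_mul, ← hH] at hbound
  linarith

/-- Base case of the tail-concavity lemma (Lemma 4.1, M = 2). -/
theorem stmt_0 (h : ℝ → ℝ) (δ : ℝ) (hδ : 0 < δ)
    (hcont : Continuous h) (h0 : h 0 = 0)
    (hconc : ConcaveOn ℝ (Set.Ioo 0 δ) h)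
    (H : ℝ → ℝ) (hH : ∀ t, H t = ∫ s in (0:ℝ)..t, h s)
    (x₁ x₂ : ℝ) (hx₁ : 0 ≤ x₁) (hx₂ : 0 ≤ x₂) (hsum : x₁ + x₂ < δ) :
    H (x₁ + x₂) - H x₁ - H x₂ - h x₁ * x₂ ≤ 0 :=
  stmt_0_general h δ hcont h0 hconc H hH x₁ x₂ hx₁ hx₂ hsum
end

section
/- Let h : ℝ → ℝ be continuous with h(0) = 0 and concave on (0, δ), and let H(t) = ∫₀ᵗ h(s) ds. Then for any M ≥ 1 and nonnegative reals x₁, …, x_M with Σᵢ xᵢ < δ, one has H(Σᵢ xᵢ) − Σᵢ H(xᵢ) − Σ_{1 ≤ i < j ≤ M} h(xᵢ)·xⱼ ≤ 0. -/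
/-! By continuity, concavity of `h` extends from `(0, δ)` to `[0, δ]`; together with `h 0 = 0`
this makes `h` subadditive there, so `h (a + u) - h u ≤ h a`, and integrating over `u ∈ [0, b]`
gives `H (a + b) ≤ H a + H b + h a * b`. Splitting off `x₀` and inducting on `M` yields the claim,
the cross term `h x₀ * (x₁ + ⋯)` accounting exactly for the pairs `(0, j)`. -/

open Set

theorem ConcaveOn.closure {E : Type*} [AddCommGroup E] [Module ℝ E] [TopologicalSpace E]
    [IsTopologicalAddGroup E] [ContinuousConstSMul ℝ E] {s : Set E} {f : E → ℝ}
    (hf : ConcaveOn ℝ s f) (hcont : ContinuousOn f (_root_.closure s)) :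
    ConcaveOn ℝ (_root_.closure s) f := by
  -- for fixed weights the concavity inequality is a closed condition on `(x, y)`
  refine ⟨hf.1.closure, fun x hx y hy a b ha hb hab => ?_⟩
  have hcomb : MapsTo (fun p : E × E => a • p.1 + b • p.2) (_root_.closure (s ×ˢ s))
      (_root_.closure s) := by
    rw [closure_prod_eq]
    exact fun p hp => hf.1.closure hp.1 hp.2 ha hb hab
  have hlin : Continuous fun p : E × E => a • p.1 + b • p.2 := by fun_prop
  refine le_on_closure (f := fun p : E × E => a • f p.1 + b • f p.2)
    (g := fun p => f (a • p.1 + b • p.2)) (fun p hp => hf.2 hp.1 hp.2 ha hb hab) ?_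
    (hcont.comp hlin.continuousOn hcomb)
    (show (x, y) ∈ _ by rw [closure_prod_eq]; exact ⟨hx, hy⟩)
  rw [closure_prod_eq]
  exact ((hcont.comp continuousOn_fst fun p hp => hp.1).const_smul a).add
    ((hcont.comp continuousOn_snd fun p hp => hp.2).const_smul b)

theorem ConcaveOn.map_add_le_s1 {s : Set ℝ} {f : ℝ → ℝ} (hf : ConcaveOn ℝ s f) (hs0 : 0 ∈ s)
    (hf0 : 0 ≤ f 0) {a b : ℝ} (ha : 0 ≤ a) (hb : 0 ≤ b) (hab : a + b ∈ s) :
    f (a + b) ≤ f a + f b := by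
  rcases (add_nonneg ha hb).eq_or_lt with hzero | hpos
  · obtain ⟨rfl, rfl⟩ : a = 0 ∧ b = 0 := ⟨by linarith, by linarith⟩
    simpa using hf0
  have hweight (c : ℝ) (hc : 0 ≤ c) (hcab : c ≤ a + b) : c / (a + b) * f (a + b) ≤ f c := by
    have := hf.2 hab hs0 (div_nonneg hc hpos.le) (div_nonneg (sub_nonneg.2 hcab) hpos.le)
      (by field_simp; ring)
    simp only [smul_eq_mul, mul_zero, add_zero, div_mul_cancel₀ c hpos.ne'] at this
    nlinarith [div_nonneg (sub_nonneg.2 hcab) hpos.le]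
  have hsplit : f (a + b) = a / (a + b) * f (a + b) + b / (a + b) * f (a + b) := by
    field_simp
  linarith [hweight a ha (by linarith), hweight b hb (by linarith)]

theorem intervalIntegral.integral_add_sub_le {h : ℝ → ℝ} (hcont : Continuous h) {a b : ℝ}
    (hb : 0 ≤ b) (hsub : ∀ u ∈ Icc 0 b, h (a + u) ≤ h a + h u) :
    ∫ s in (0 : ℝ)..a + b, h s
      ≤ (∫ s in (0 : ℝ)..a, h s) + (∫ s in (0 : ℝ)..b, h s) + h a * b := by
  have hshift : ∫ s in (0 : ℝ)..a + b, h s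
      = (∫ s in (0 : ℝ)..a, h s) + ∫ u in (0 : ℝ)..b, h (a + u) := by
    rw [← intervalIntegral.integral_add_adjacent_intervals (hcont.intervalIntegrable 0 a)
      (hcont.intervalIntegrable a (a + b)), intervalIntegral.integral_comp_add_left h a]
    simp
  have hmono : ∫ u in (0 : ℝ)..b, h (a + u) ≤ ∫ u in (0 : ℝ)..b, (h a + h u) :=
    intervalIntegral.integral_mono_on hb
      ((hcont.comp (continuous_const_add a)).intervalIntegrable 0 b)
      ((continuous_const.add hcont).intervalIntegrable 0 b) hsub
  rw [intervalIntegral.integral_add intervalIntegrable_const (hcont.intervalIntegrable 0 b),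
    intervalIntegral.integral_const, smul_eq_mul, sub_zero] at hmono
  linarith

theorem Fin.sum_filter_lt_succ {β : Type*} [AddCommMonoid β] {M : ℕ}
    (f : Fin (M + 1) → Fin (M + 1) → β) :
    ∑ p ∈ Finset.univ.filter (fun p : Fin (M + 1) × Fin (M + 1) => p.1 < p.2), f p.1 p.2
      = ∑ j : Fin M, f 0 j.succ
        + ∑ p ∈ Finset.univ.filter (fun p : Fin M × Fin M => p.1 < p.2), f p.1.succ p.2.succ := by
  simp only [Finset.sum_filter, Fintype.sum_prod_type, Fin.sum_univ_succ,
    if_false, Fin.succ_pos, if_true, Fin.not_lt_zero, Fin.succ_lt_succ_iff, zero_add]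

theorem map_sum_le_sum_map_add_sum_lt {F g : ℝ → ℝ} {δ : ℝ} (hF0 : F 0 = 0)
    (hF : ∀ a b, 0 ≤ a → 0 ≤ b → a + b < δ → F (a + b) ≤ F a + F b + g a * b) :
    ∀ {M : ℕ} (x : Fin M → ℝ), (∀ i, 0 ≤ x i) → ∑ i, x i < δ →
      F (∑ i, x i) ≤ ∑ i, F (x i)
        + ∑ p ∈ Finset.univ.filter (fun p : Fin M × Fin M => p.1 < p.2), g (x p.1) * x p.2
  | 0, _, _, _ => by simp [hF0]
  | M + 1, x, hx, hsum => by
    have htail := map_sum_le_sum_map_add_sum_lt hF0 hF (fun i => x i.succ) (fun i => hx _)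
      (by rw [Fin.sum_univ_succ] at hsum; linarith [hx 0])
    rw [Fin.sum_univ_succ] at hsum ⊢
    rw [Fin.sum_univ_succ, Fin.sum_filter_lt_succ (fun i j => g (x i) * x j), ← Finset.mul_sum]
    have hhead := hF (x 0) _ (hx 0) (Finset.sum_nonneg fun i _ => hx i.succ) hsum
    linarith

theorem stmt_1_general (h : ℝ → ℝ) (δ : ℝ) (hδ : 0 < δ)
    (hcont : Continuous h) (h0 : h 0 = 0)
    (hconc : ConcaveOn ℝ (Set.Ioo 0 δ) h)
    (H : ℝ → ℝ) (hH : ∀ t, H t = ∫ s in (0:ℝ)..t, h s)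
    (M : ℕ) (x : Fin M → ℝ) (hx : ∀ i, 0 ≤ x i)
    (hsum : ∑ i, x i < δ) :
    H (∑ i, x i) - ∑ i, H (x i)
      - ∑ p ∈ Finset.univ.filter (fun p : Fin M × Fin M => p.1 < p.2),
          h (x p.1) * x p.2 ≤ 0 := by
  have hconcIcc : ConcaveOn ℝ (Icc 0 δ) h := by
    simpa [closure_Ioo hδ.ne] using hconc.closure hcont.continuousOn
  have hH_add (a b : ℝ) (ha : 0 ≤ a) (hb : 0 ≤ b) (hab : a + b < δ) :
      H (a + b) ≤ H a + H b + h a * b := by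
    simp only [hH]
    refine intervalIntegral.integral_add_sub_le hcont hb fun u hu => ?_
    exact hconcIcc.map_add_le_s1 ⟨le_rfl, hδ.le⟩ h0.ge ha hu.1
      ⟨by linarith [hu.1], by linarith [hu.2]⟩
  have := map_sum_le_sum_map_add_sum_lt (by simp [hH]) hH_add x hx hsum
  linarith

/-- Tail-concavity lemma (Lemma 4.1): the superposition of M small nonnegative
values is energetically unfavorable for a concave nonlinearity. -/
theorem stmt_1 (h : ℝ → ℝ) (δ : ℝ) (hδ : 0 < δ)
    (hcont : Continuous h) (h0 : h 0 = 0)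
    (hconc : ConcaveOn ℝ (Set.Ioo 0 δ) h)
    (H : ℝ → ℝ) (hH : ∀ t, H t = ∫ s in (0:ℝ)..t, h s)
    (M : ℕ) (hM : 1 ≤ M) (x : Fin M → ℝ) (hx : ∀ i, 0 ≤ x i)
    (hsum : ∑ i, x i < δ) :
    H (∑ i, x i) - ∑ i, H (x i)
      - ∑ p ∈ Finset.univ.filter (fun p : Fin M × Fin M => p.1 < p.2),
          h (x p.1) * x p.2 ≤ 0 :=
  stmt_1_general h δ hδ hcont h0 hconc H hH M x hx hsum
end

section
/- For any finite set P = {x₁, …, x_M} of M ≥ 2 distinct points in ℝⁿ, there exist a constant D = D(M) > 0 (depending only on M, not on the points), a point y ∈ P, and a unit vector e ∈ Sⁿ⁻¹ such that (xᵢ − y) · e ≥ (1/D) |xᵢ − y| for every xᵢ ∈ P \ {y}. -/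
/-!
Choose a unit vector `e` that is quantitatively far from orthogonal to every difference
`x j - x i`, i.e. `|⟪x j - x i, e⟫| ≥ c ‖x j - x i‖` with `c` depending only on the number
of points; then the point `x i` minimising `⟪x i, e⟫` works, since all `⟪x j - x i, e⟫` are
nonnegative. Such an `e` is built one vector at a time: starting from `e = 0`, each new vector
`u` is handled by moving `e` a distance `c / 2` along `± u`, which makes `|⟪u, e⟫| ≥ c ‖u‖ / 2`
and costs the earlier vectors at most `c ‖v‖ / 2`, so the constant halves at each step.
-/

open Finset RealInnerProductSpace

variable {E : Type*} [NormedAddCommGroup E] [InnerProductSpace ℝ E]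

theorem exists_norm_sub_le_mul_norm_le_abs_inner (e u : E) {t : ℝ} (ht : 0 ≤ t) :
    ∃ e' : E, ‖e' - e‖ ≤ t ∧ t * ‖u‖ ≤ |⟪u, e'⟫| := by
  wlog hue : 0 ≤ ⟪u, e⟫ generalizing u
  · obtain ⟨e', he', hu⟩ := this (-u) (by rw [inner_neg_left]; linarith)
    exact ⟨e', he', by simpa [inner_neg_left] using hu⟩
  rcases eq_or_ne u 0 with rfl | hu
  · exact ⟨e, by simpa using ht, by simp⟩
  have hu' : ‖u‖ ≠ 0 := norm_ne_zero_iff.mpr hu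
  refine ⟨e + (t / ‖u‖) • u, ?_, ?_⟩
  · simp [norm_smul, abs_of_nonneg ht, hu']
  · have : ⟪u, e + (t / ‖u‖) • u⟫ = ⟪u, e⟫ + t * ‖u‖ := by
      rw [inner_add_right, real_inner_smul_right, real_inner_self_eq_norm_sq]
      field_simp
    rw [this, abs_of_nonneg (by positivity)]
    linarith

theorem abs_inner_sub_mul_norm_le_abs_inner (v e e' : E) :
    |⟪v, e⟫| - ‖v‖ * ‖e' - e‖ ≤ |⟪v, e'⟫| := by
  have h : ⟪v, e⟫ = ⟪v, e'⟫ - ⟪v, e' - e⟫ := by rw [inner_sub_right]; ring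
  have := abs_sub ⟪v, e'⟫ ⟪v, e' - e⟫
  rw [← h] at this
  linarith [abs_real_inner_le_norm v (e' - e)]

theorem exists_norm_le_forall_mul_norm_le_abs_inner {ι : Type*} (v : ι → E) (s : Finset ι) :
    ∃ e : E, ‖e‖ ≤ 1 - (1 / 2) ^ #s ∧ ∀ i ∈ s, (1 / 2) ^ #s * ‖v i‖ ≤ |⟪v i, e⟫| := by
  classical
  induction s using Finset.induction_on with
  | empty => exact ⟨0, by simp, by simp⟩
  | @insert a s ha ih =>
    obtain ⟨e, he, hs⟩ := ih
    set c : ℝ := (1 / 2) ^ #s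
    have hcard : (1 / 2 : ℝ) ^ #(insert a s) = c / 2 := by
      rw [card_insert_of_notMem ha, pow_succ]; ring
    obtain ⟨e', hee', ha'⟩ :=
      exists_norm_sub_le_mul_norm_le_abs_inner e (v a) (t := c / 2) (by positivity)
    refine ⟨e', ?_, ?_⟩
    · rw [hcard]
      linarith [norm_le_norm_add_norm_sub' e' e]
    · rw [hcard]
      rintro i hi
      rcases mem_insert.mp hi with rfl | hi
      · exact ha'
      · calc c / 2 * ‖v i‖ = c * ‖v i‖ - ‖v i‖ * (c / 2) := by ring
          _ ≤ |⟪v i, e⟫| - ‖v i‖ * ‖e' - e‖ := by gcongr; exact hs i hi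
          _ ≤ |⟪v i, e'⟫| := abs_inner_sub_mul_norm_le_abs_inner _ _ _

theorem exists_norm_eq_one_forall_mul_norm_le_abs_inner [Nontrivial E] {ι : Type*} [Fintype ι]
    (v : ι → E) :
    ∃ e : E, ‖e‖ = 1 ∧ ∀ i, (1 / 2) ^ Fintype.card ι * ‖v i‖ ≤ |⟪v i, e⟫| := by
  obtain ⟨e, he, hv⟩ := exists_norm_le_forall_mul_norm_le_abs_inner v univ
  rw [card_univ] at he hv
  set c : ℝ := (1 / 2) ^ Fintype.card ι
  rcases eq_or_ne e 0 with rfl | he0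
  · obtain ⟨e₁, he₁⟩ := exists_norm_eq E zero_le_one
    refine ⟨e₁, he₁, fun i => ?_⟩
    have : c * ‖v i‖ ≤ 0 := by simpa using hv i (mem_univ i)
    have hvi : ‖v i‖ = 0 := le_antisymm (nonpos_of_mul_nonpos_right this (by positivity))
      (norm_nonneg _)
    simp [hvi]
  · have hnorm : 0 < ‖e‖ := norm_pos_iff.mpr he0
    have hc : 0 ≤ c := by positivity
    refine ⟨‖e‖⁻¹ • e, norm_smul_inv_norm he0, fun i => ?_⟩
    rw [real_inner_smul_right, abs_mul, abs_of_pos (inv_pos.mpr hnorm)]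
    calc c * ‖v i‖ ≤ |⟪v i, e⟫| := hv i (mem_univ i)
      _ ≤ ‖e‖⁻¹ * |⟪v i, e⟫| :=
        le_mul_of_one_le_left (abs_nonneg _) (one_le_inv₀ hnorm |>.mpr (by linarith))

theorem exists_forall_mul_norm_sub_le_inner_sub [Nontrivial E] {ι : Type*} [Fintype ι]
    [Nonempty ι] (x : ι → E) :
    ∃ (i : ι) (e : E), ‖e‖ = 1 ∧
      ∀ j, (1 / 2) ^ (Fintype.card ι * Fintype.card ι) * ‖x j - x i‖ ≤ ⟪x j - x i, e⟫ := by
  obtain ⟨e, he, hgood⟩ :=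
    exists_norm_eq_one_forall_mul_norm_le_abs_inner (fun p : ι × ι => x p.1 - x p.2)
  obtain ⟨i, hi⟩ := Finite.exists_min (fun j => ⟪x j, e⟫)
  refine ⟨i, e, he, fun j => ?_⟩
  have hnonneg : 0 ≤ ⟪x j - x i, e⟫ := by rw [inner_sub_left]; linarith [hi j]
  simpa [abs_of_nonneg hnonneg] using hgood (j, i)

/-- Lemma 4.4, inequality (4.5): quantitative extremal direction for a finite
collection of distinct points, with a constant depending only on M and n. -/
theorem stmt_2 (M n : ℕ) (hM : 2 ≤ M) :
    ∃ D : ℝ, 0 < D ∧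
      ∀ x : Fin M → EuclideanSpace ℝ (Fin n), Function.Injective x →
        ∃ (i : Fin M) (e : EuclideanSpace ℝ (Fin n)), ‖e‖ = 1 ∧
          ∀ j, j ≠ i → (1 / D) * ‖x j - x i‖ ≤ (inner ℝ (x j - x i) e : ℝ) := by
  refine ⟨2 ^ (M * M), by positivity, fun x hx => ?_⟩
  have : Nonempty (Fin M) := ⟨⟨0, by omega⟩⟩
  have : Nontrivial (EuclideanSpace ℝ (Fin n)) :=
    nontrivial_of_ne (x ⟨0, by omega⟩) (x ⟨1, by omega⟩) (hx.ne (by simp))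
  obtain ⟨i, e, he, hi⟩ := exists_forall_mul_norm_sub_le_inner_sub x
  exact ⟨i, e, he, fun j _ => by simpa using hi j⟩
end

section
/- Suppose P = {x₁, …, x_M} ⊂ ℝⁿ are distinct points with pairwise separation |xᵢ − xⱼ| ≥ L for i ≠ j, and suppose y ∈ P and a unit vector e satisfy (x − y) · e ≥ (1/D)|x − y| for all x ∈ P \ {y}, where D ≥ 1. Then for every z with |z − y| ≤ L/(2D) and every x ∈ P \ {y}, one has (x − z) · e ≥ (1/D₂)|x − z|, where D₂ = 2D(1 + 1/(2D)). -/
/-! Write `x j - z = a - w` with `a = x j - y` and `w = z - y`. Separation gives `‖w‖ ≤ ‖a‖ / (2D)`,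
so moving the apex from `y` to `z` costs at most half of the cone margin `‖a‖ / D` in the
`e`-component, and stretches `‖a‖` by at most the factor `1 + 1/(2D)`. -/

open RealInnerProductSpace

lemma norm_sub_le_of_norm_le_div {G : Type*} [SeminormedAddGroup G] {a w : G} {D : ℝ}
    (hD : 0 < D) (hw : ‖w‖ ≤ ‖a‖ / (2 * D)) :
    ‖a - w‖ / (2 * D + 1) ≤ ‖a‖ / (2 * D) := by
  have hsum : ‖a‖ + ‖a‖ / (2 * D) = (2 * D + 1) * (‖a‖ / (2 * D)) := by
    field_simp
  rw [div_le_iff₀ (by positivity), mul_comm, ← hsum]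
  linarith [norm_sub_le a w]

section Cone

variable {E : Type*} [NormedAddCommGroup E] [InnerProductSpace ℝ E]

lemma inner_sub_ge_of_cone {a w e : E} {D : ℝ} (he : ‖e‖ ≤ 1)
    (ha : ‖a‖ / D ≤ ⟪a, e⟫) (hw : ‖w‖ ≤ ‖a‖ / (2 * D)) :
    ‖a‖ / (2 * D) ≤ ⟪a - w, e⟫ := by
  have hwe : ⟪w, e⟫ ≤ ‖w‖ :=
    (real_inner_le_norm w e).trans (mul_le_of_le_one_right (norm_nonneg w) he)
  have hhalf : ‖a‖ / D = ‖a‖ / (2 * D) + ‖a‖ / (2 * D) := by ring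
  rw [inner_sub_left]
  linarith

lemma cone_condition_sub {a w e : E} {D : ℝ} (hD : 0 < D) (he : ‖e‖ ≤ 1)
    (ha : ‖a‖ / D ≤ ⟪a, e⟫) (hw : ‖w‖ ≤ ‖a‖ / (2 * D)) :
    ‖a - w‖ / (2 * D + 1) ≤ ⟪a - w, e⟫ :=
  (norm_sub_le_of_norm_le_div hD hw).trans (inner_sub_ge_of_cone he ha hw)

end Cone

theorem stmt_4_general (n M : ℕ) (x : Fin M → EuclideanSpace ℝ (Fin n))
    (L D : ℝ) (hD : 1 ≤ D)
    (hsep : ∀ i j, i ≠ j → L ≤ ‖x i - x j‖)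
    (i₀ : Fin M) (e : EuclideanSpace ℝ (Fin n)) (he : ‖e‖ = 1)
    (hcone : ∀ j, j ≠ i₀ → (1 / D) * ‖x j - x i₀‖ ≤ (inner ℝ (x j - x i₀) e : ℝ)) :
    ∀ z : EuclideanSpace ℝ (Fin n), ‖z - x i₀‖ ≤ L / (2 * D) →
      ∀ j, j ≠ i₀ →
        (1 / (2 * D * (1 + 1 / (2 * D)))) * ‖x j - z‖ ≤ (inner ℝ (x j - z) e : ℝ) := by
  intro z hz j hj
  have hD0 : 0 < D := one_pos.trans_le hD
  have hw : ‖z - x i₀‖ ≤ ‖x j - x i₀‖ / (2 * D) :=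
    hz.trans (div_le_div_of_nonneg_right (hsep j i₀ hj) (by positivity))
  have ha : ‖x j - x i₀‖ / D ≤ ⟪x j - x i₀, e⟫ := by
    simpa only [one_div_mul_eq_div] using hcone j hj
  have hconst : 1 / (2 * D * (1 + 1 / (2 * D))) * ‖x j - z‖ = ‖x j - z‖ / (2 * D + 1) := by
    field_simp
  have hsplit : x j - z = (x j - x i₀) - (z - x i₀) := (sub_sub_sub_cancel_right _ _ _).symm
  rw [hconst, hsplit]
  exact cone_condition_sub hD0 he.le ha hw

/-- Lemma 4.4, inequality (4.6): the cone condition persists in a neighborhood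
of the extremal center, quantitatively. -/
theorem stmt_4 (n M : ℕ) (x : Fin M → EuclideanSpace ℝ (Fin n))
    (L D : ℝ) (hL : 0 < L) (hD : 1 ≤ D)
    (hsep : ∀ i j, i ≠ j → L ≤ ‖x i - x j‖)
    (i₀ : Fin M) (e : EuclideanSpace ℝ (Fin n)) (he : ‖e‖ = 1)
    (hcone : ∀ j, j ≠ i₀ → (1 / D) * ‖x j - x i₀‖ ≤ (inner ℝ (x j - x i₀) e : ℝ)) :
    ∀ z : EuclideanSpace ℝ (Fin n), ‖z - x i₀‖ ≤ L / (2 * D) →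
      ∀ j, j ≠ i₀ →
        (1 / (2 * D * (1 + 1 / (2 * D)))) * ‖x j - z‖ ≤ (inner ℝ (x j - z) e : ℝ) :=
  stmt_4_general n M x L D hD hsep i₀ e he hcone
end

section
/- Let x, y ∈ ℝⁿ with |y| < |x|, write y = (ỹ, yₙ) ∈ ℝⁿ⁻¹ × ℝ, and let eₙ be the n-th standard basis vector. Then |y − |x| eₙ| + |y| ≥ |ỹ|²/(2|y|) + |x| (with the convention that the inequality is interpreted for y ≠ 0). -/
/-!
Write `s = |y|` and `t = yₙ`, so that `|ỹ|² = s² - t² = (s - t)(s + t)`. Since `s + t ≤ 2s`,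
the left side is at most `(s - t) + |x|`, and `|x| - t` is the last coordinate of `|x|eₙ - y`,
hence at most `|y - |x|eₙ|`.
-/

lemma sq_sub_sq_div_two_mul_le_sub {s t : ℝ} (hs : 0 ≤ s) (hts : |t| ≤ s) :
    (s ^ 2 - t ^ 2) / (2 * s) ≤ s - t := by
  rcases hs.eq_or_lt with rfl | hs
  · simpa using (le_abs_self t).trans hts
  rw [div_le_iff₀ (by positivity)]
  nlinarith [abs_le.mp hts]

lemma EuclideanSpace.sq_norm_sub_sq_apply_div_add_le {ι : Type*} [Fintype ι] [DecidableEq ι]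
    (y : EuclideanSpace ℝ ι) (i : ι) (c : ℝ) :
    (‖y‖ ^ 2 - y i ^ 2) / (2 * ‖y‖) + c ≤ ‖y - c • EuclideanSpace.single i 1‖ + ‖y‖ := by
  have hyi : |y i| ≤ ‖y‖ := by simpa using PiLp.norm_apply_le y i
  have hci : c - y i ≤ ‖y - c • EuclideanSpace.single i 1‖ := by
    have := PiLp.norm_apply_le (y - c • EuclideanSpace.single i 1) i
    rw [PiLp.sub_apply, PiLp.smul_apply, PiLp.single_eq_same, smul_eq_mul, mul_one,
      Real.norm_eq_abs, abs_sub_comm] at this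
    exact (le_abs_self _).trans this
  linarith [sq_sub_sq_div_two_mul_le_sub (norm_nonneg y) hyi]

lemma EuclideanSpace.sum_sq_apply_castSucc (n : ℕ) (y : EuclideanSpace ℝ (Fin (n + 1))) :
    ∑ i : Fin n, y (Fin.castSucc i) ^ 2 = ‖y‖ ^ 2 - y (Fin.last n) ^ 2 := by
  rw [EuclideanSpace.real_norm_sq_eq, Fin.sum_univ_castSucc, add_sub_cancel_right]

theorem stmt_5_general (n : ℕ) (x y : EuclideanSpace ℝ (Fin (n + 1))) :
    (∑ i : Fin n, (y (Fin.castSucc i))^2) / (2 * ‖y‖) + ‖x‖ ≤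
      ‖y - ‖x‖ • EuclideanSpace.single (Fin.last n) (1 : ℝ)‖ + ‖y‖ := by
  rw [EuclideanSpace.sum_sq_apply_castSucc]
  exact EuclideanSpace.sq_norm_sub_sq_apply_div_add_le y (Fin.last n) ‖x‖

/-- The elementary inequality (4.10): |y − |x|eₙ| + |y| ≥ |ỹ|²/(2|y|) + |x|. -/
theorem stmt_5 (n : ℕ) (x y : EuclideanSpace ℝ (Fin (n + 1)))
    (hy : y ≠ 0) (hxy : ‖y‖ < ‖x‖) :
    (∑ i : Fin n, (y (Fin.castSucc i))^2) / (2 * ‖y‖) + ‖x‖ ≤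
      ‖y - ‖x‖ • EuclideanSpace.single (Fin.last n) (1 : ℝ)‖ + ‖y‖ :=
  stmt_5_general n x y
end

section
/- Let Q be a continuous symmetric bilinear form on a real Hilbert space H and suppose there exists v ∈ H with Q(v, v) < 0 and that Q(φ, φ) ≥ 0 for all φ in a closed hyperplane K = {φ : ℓ(φ) = 0} for some nonzero continuous linear functional ℓ. Then the maximal dimension of a subspace of H on which Q is negative definite equals 1. -/
/-!
A subspace on which `Q` is negative definite meets `ker ℓ` only in `0`, since `Q ≥ 0` there;
so `ℓ` is injective on it and its dimension is at most `dim ℝ = 1`. The line through `v`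
attains this bound.
-/

open Submodule

theorem LinearMap.apply_self_neg_of_mem_span_singleton {R M : Type*} [Field R] [LinearOrder R]
    [IsStrictOrderedRing R] [AddCommGroup M] [Module R M] (B : M →ₗ[R] M →ₗ[R] R) {v : M}
    (hv : B v v < 0) : ∀ x ∈ R ∙ v, x ≠ 0 → B x x < 0 := by
  rintro x hx hx0
  obtain ⟨c, rfl⟩ := mem_span_singleton.mp hx
  have hc : c ≠ 0 := by rintro rfl; simp at hx0
  have hBc : B (c • v) (c • v) = c * c * B v v := by simp [mul_assoc]
  rw [hBc]
  exact mul_neg_of_pos_of_neg (mul_self_pos.mpr hc) hv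

theorem Submodule.rank_le_one_of_disjoint_ker {K M : Type*} [DivisionRing K] [AddCommGroup M]
    [Module K M] (ℓ : M →ₗ[K] K) {S : Submodule K M} (hS : Disjoint S (LinearMap.ker ℓ)) :
    Module.rank K S ≤ 1 := by
  simpa using (ℓ.domRestrict S).lift_rank_le_of_injective <|
    LinearMap.injective_domRestrict_iff.mpr hS

theorem rank_span_singleton {K M : Type*} [DivisionRing K] [AddCommGroup M] [Module K M] {v : M}
    (hv : v ≠ 0) : Module.rank K (K ∙ v) = 1 := by
  rw [rank_submodule_eq_one_iff]
  exact ⟨v, mem_span_singleton_self v, hv, le_rfl⟩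

theorem stmt_15_general {H : Type*} [NormedAddCommGroup H] [InnerProductSpace ℝ H]
    (Q : H →L[ℝ] H →L[ℝ] ℝ)
    (ℓ : H →L[ℝ] ℝ)
    (hK : ∀ φ : H, ℓ φ = 0 → 0 ≤ Q φ φ)
    (v : H) (hv : Q v v < 0) :
    (∃ S : Submodule ℝ H, Module.rank ℝ S = 1 ∧
        ∀ x ∈ S, x ≠ 0 → Q x x < 0) ∧
      ∀ S : Submodule ℝ H, (∀ x ∈ S, x ≠ 0 → Q x x < 0) →
        Module.rank ℝ S ≤ 1 := by
  have hv0 : v ≠ 0 := by rintro rfl; simp at hv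
  refine ⟨⟨ℝ ∙ v, rank_span_singleton hv0, ?_⟩, fun S hS => ?_⟩
  · simpa using Q.toLinearMap₁₂.apply_self_neg_of_mem_span_singleton (by simpa using hv)
  · refine rank_le_one_of_disjoint_ker (ℓ : H →ₗ[ℝ] ℝ) (disjoint_def.mpr fun x hxS hxℓ => ?_)
    by_contra hx0
    exact (hS x hxS hx0).not_ge (hK x hxℓ)

/-- A continuous symmetric bilinear form that is nonnegative on a closed
hyperplane and negative somewhere has a one-dimensional maximal negative
subspace. -/
theorem stmt_15 {H : Type*} [NormedAddCommGroup H] [InnerProductSpace ℝ H]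
    [CompleteSpace H] (Q : H →L[ℝ] H →L[ℝ] ℝ)
    (hsymm : ∀ x y : H, Q x y = Q y x)
    (ℓ : H →L[ℝ] ℝ) (hℓ : ℓ ≠ 0)
    (hK : ∀ φ : H, ℓ φ = 0 → 0 ≤ Q φ φ)
    (v : H) (hv : Q v v < 0) :
    (∃ S : Submodule ℝ H, Module.rank ℝ S = 1 ∧
        ∀ x ∈ S, x ≠ 0 → Q x x < 0) ∧
      ∀ S : Submodule ℝ H, (∀ x ∈ S, x ≠ 0 → Q x x < 0) →
        Module.rank ℝ S ≤ 1 :=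
  stmt_15_general Q ℓ hK v hv
end

section
/- Let m > 0 and C ≥ 1, and suppose w : [r₀, ∞) → (0, ∞) is C² with (1/C) w(r) ≤ w''(r) ≤ C w(r) for all r ≥ r₀ and w(r) ≤ C e^{−r/m} for all r ≥ r₀. Then −w'(r) > 0 for all r ≥ r₀ and there is a constant C' such that (1/C') e^{−κ₂ r} ≤ −w'(r), for suitable κ₂ > 0; moreover −w'(r) ≤ ∫_r^∞ w''(s) ds ≤ C ∫_r^∞ w(s) ds ≤ C² m e^{−r/m}. -/
/-!
Since `w'' ≥ w / C > 0`, `w'` is strictly increasing; as `w` is positive and bounded, `w'` can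
neither become positive nor stay below a negative constant, so `w' < 0` and `w' → 0`. Integrating
`w'' ≤ C w ≤ C² e^{-r/m}` over `[r, ∞)` gives the upper bound on `-w'`. For the lower bound, the
energy `C w'² - w²` has derivative `2 w' (C w'' - w) ≤ 0` and tends to `0`, hence is nonnegative:
`w ≤ √C (-w')`. Then `w'' ≤ C √C (-w')`, so `e^{C √C r} (-w'(r))` is nondecreasing.
-/

open Set Filter Topology

section HalfLine

variable {f f' : ℝ → ℝ} {a : ℝ}

theorem monotoneOn_Ici_of_hasDerivAt_nonneg (hf : ContinuousOn f (Ici a))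
    (hf' : ∀ x, a < x → HasDerivAt f (f' x) x) (hpos : ∀ x, a < x → 0 ≤ f' x) :
    MonotoneOn f (Ici a) :=
  monotoneOn_of_hasDerivWithinAt_nonneg (convex_Ici a) hf
    (fun x hx => (hf' x (by rwa [interior_Ici] at hx)).hasDerivWithinAt)
    fun x hx => hpos x (by rwa [interior_Ici] at hx)

theorem strictMonoOn_Ici_of_hasDerivAt_pos (hf : ContinuousOn f (Ici a))
    (hf' : ∀ x, a < x → HasDerivAt f (f' x) x) (hpos : ∀ x, a < x → 0 < f' x) :
    StrictMonoOn f (Ici a) :=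
  strictMonoOn_of_hasDerivWithinAt_pos (convex_Ici a) hf
    (fun x hx => (hf' x (by rwa [interior_Ici] at hx)).hasDerivWithinAt)
    fun x hx => hpos x (by rwa [interior_Ici] at hx)

theorem antitoneOn_Ici_of_hasDerivAt_nonpos (hf : ContinuousOn f (Ici a))
    (hf' : ∀ x, a < x → HasDerivAt f (f' x) x) (hneg : ∀ x, a < x → f' x ≤ 0) :
    AntitoneOn f (Ici a) :=
  antitoneOn_of_hasDerivWithinAt_nonpos (convex_Ici a) hf
    (fun x hx => (hf' x (by rwa [interior_Ici] at hx)).hasDerivWithinAt)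
    fun x hx => hneg x (by rwa [interior_Ici] at hx)

theorem exists_gt_of_hasDerivAt_ge {c : ℝ} (hc : 0 < c) (hf : ContinuousOn f (Ici a))
    (hf' : ∀ x, a < x → HasDerivAt f (f' x) x) (hge : ∀ x, a < x → c ≤ f' x) (M : ℝ) :
    ∃ x, a ≤ x ∧ M < f x := by
  have hmono : MonotoneOn (fun x => f x - x * c) (Ici a) :=
    monotoneOn_Ici_of_hasDerivAt_nonneg (hf.sub (continuousOn_id.mul continuousOn_const))
      (fun x hx => (hf' x hx).sub (hasDerivAt_mul_const c)) fun x hx => sub_nonneg.2 (hge x hx)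
  have hδ : 0 ≤ |M - f a| / c := by positivity
  refine ⟨a + |M - f a| / c + 1, by linarith, ?_⟩
  have hlin := hmono self_mem_Ici (mem_Ici.2 (by linarith)) (by linarith : a ≤ a + |M - f a| / c + 1)
  have hstep : (a + |M - f a| / c + 1) * c - a * c = |M - f a| + c := by field_simp; ring
  simp only at hlin
  linarith [le_abs_self (M - f a)]

theorem tendsto_exp_neg_div_atTop {m : ℝ} (hm : 0 < m) :
    Tendsto (fun x : ℝ => Real.exp (-x / m)) atTop (𝓝 0) :=
  Real.tendsto_exp_atBot.comp (tendsto_neg_atTop_atBot.atBot_div_const hm)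

theorem nonneg_of_antitoneOn_Ici_of_tendsto (hf : AntitoneOn f (Ici a))
    (hlim : Tendsto f atTop (𝓝 0)) {x : ℝ} (hx : a ≤ x) : 0 ≤ f x :=
  le_of_tendsto hlim <| by
    filter_upwards [eventually_ge_atTop x] with y hy using hf hx (hx.trans hy) hy

end HalfLine

section Decay

variable {w u v : ℝ → ℝ} {a : ℝ}

theorem nonpos_of_monotoneOn_deriv_of_le (hw : ContinuousOn w (Ici a))
    (hwu : ∀ x, a < x → HasDerivAt w (u x) x) (hu : MonotoneOn u (Ici a)) {M : ℝ}
    (hM : ∀ x, a ≤ x → w x ≤ M) {x : ℝ} (hx : a ≤ x) : u x ≤ 0 := by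
  by_contra! hux
  obtain ⟨y, hxy, hMy⟩ := exists_gt_of_hasDerivAt_ge hux (hw.mono (Ici_subset_Ici.2 hx))
    (fun y hy => hwu y (hx.trans_lt hy)) (fun y hy => hu hx (hx.trans hy.le) hy.le) M
  exact hMy.not_ge (hM y (hx.trans hxy))

theorem tendsto_zero_of_monotoneOn_deriv_of_bounded (hw : ContinuousOn w (Ici a))
    (hwu : ∀ x, a < x → HasDerivAt w (u x) x) (hu : MonotoneOn u (Ici a)) {m M : ℝ}
    (hm : ∀ x, a ≤ x → m ≤ w x) (hM : ∀ x, a ≤ x → w x ≤ M) : Tendsto u atTop (𝓝 0) := by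
  refine tendsto_order.2 ⟨fun ε hε => ?_, fun ε hε => ?_⟩
  · obtain ⟨b, hab, hεb⟩ : ∃ b, a ≤ b ∧ ε < u b := by
      by_contra! hle
      obtain ⟨y, hay, hy⟩ := exists_gt_of_hasDerivAt_ge (neg_pos.2 hε) hw.neg
        (fun x hx => (hwu x hx).neg) (fun x hx => neg_le_neg (hle x hx.le)) (-m)
      linarith [hm y hay, show (-w) y = -w y from rfl]
    filter_upwards [eventually_ge_atTop b] with x hbx
      using hεb.trans_le (hu hab (hab.trans hbx) hbx)
  · filter_upwards [eventually_ge_atTop a] with x hx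
      using (nonpos_of_monotoneOn_deriv_of_le hw hwu hu hM hx).trans_lt hε


theorem neg_of_strictMonoOn_deriv_of_le (hw : ContinuousOn w (Ici a))
    (hwu : ∀ x, a < x → HasDerivAt w (u x) x) (hu : StrictMonoOn u (Ici a)) {M : ℝ}
    (hM : ∀ x, a ≤ x → w x ≤ M) {x : ℝ} (hx : a ≤ x) : u x < 0 :=
  calc u x < u (x + 1) := hu hx (by simp only [mem_Ici]; linarith) (by linarith)
    _ ≤ 0 := nonpos_of_monotoneOn_deriv_of_le hw hwu hu.monotoneOn hM (by linarith)

theorem neg_le_mul_exp_of_hasDerivAt_le {m K : ℝ} (hm : 0 < m)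
    (huv : ∀ x, a ≤ x → HasDerivAt u (v x) x) (hv : ∀ x, a ≤ x → v x ≤ K * Real.exp (-x / m))
    (hlim : Tendsto u atTop (𝓝 0)) {x : ℝ} (hx : a ≤ x) :
    -u x ≤ K * m * Real.exp (-x / m) := by
  have hexp : ∀ y, HasDerivAt (fun y => K * m * Real.exp (-y / m)) (-(K * Real.exp (-y / m))) y :=
    fun y => (((hasDerivAt_neg y).div_const m).exp.const_mul (K * m)).congr_deriv (by field_simp)
  have hanti : AntitoneOn (fun y => u y + K * m * Real.exp (-y / m)) (Ici a) :=
    antitoneOn_Ici_of_hasDerivAt_nonpos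
      ((HasDerivAt.continuousOn huv).add (HasDerivAt.continuousOn fun y _ => hexp y))
      (fun y hy => (huv y hy.le).add (hexp y)) fun y hy => by linarith [hv y hy.le]
  have hlim' : Tendsto (fun y => u y + K * m * Real.exp (-y / m)) atTop (𝓝 0) := by
    simpa using hlim.add ((tendsto_exp_neg_div_atTop hm).const_mul (K * m))
  linarith [nonneg_of_antitoneOn_Ici_of_tendsto hanti hlim' hx]

theorem le_sqrt_mul_neg_of_le_mul {C : ℝ} (hC : 0 ≤ C) (hw : ContinuousOn w (Ici a))
    (hwu : ∀ x, a < x → HasDerivAt w (u x) x) (huv : ∀ x, a ≤ x → HasDerivAt u (v x) x)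
    (hwv : ∀ x, a ≤ x → w x ≤ C * v x) (hu : ∀ x, a ≤ x → u x ≤ 0)
    (hwlim : Tendsto w atTop (𝓝 0)) (hulim : Tendsto u atTop (𝓝 0))
    {x : ℝ} (hx : a ≤ x) (hwx : 0 ≤ w x) : w x ≤ √C * -u x := by
  have hanti : AntitoneOn (fun y => C * u y ^ 2 - w y ^ 2) (Ici a) := by
    refine antitoneOn_Ici_of_hasDerivAt_nonpos
      (((HasDerivAt.continuousOn huv).pow 2).const_smul C |>.sub (hw.pow 2))
      (fun y hy => (((huv y hy.le).pow 2).const_mul C).sub ((hwu y hy).pow 2)) fun y hy => ?_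
    have := mul_nonpos_of_nonpos_of_nonneg (hu y hy.le) (sub_nonneg.2 (hwv y hy.le))
    simp only [Nat.cast_ofNat, Nat.reduceSub, pow_one]
    linarith
  have hlim : Tendsto (fun y => C * u y ^ 2 - w y ^ 2) atTop (𝓝 0) := by
    simpa using ((hulim.pow 2).const_mul C).sub (hwlim.pow 2)
  have hsq := nonneg_of_antitoneOn_Ici_of_tendsto hanti hlim hx
  have hrhs : 0 ≤ √C * -u x := mul_nonneg (Real.sqrt_nonneg C) (neg_nonneg.2 (hu x hx))
  rw [← pow_le_pow_iff_left₀ hwx hrhs two_ne_zero, mul_pow, Real.sq_sqrt hC]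
  linarith [neg_sq (u x)]

theorem exp_mul_neg_mul_exp_le_of_le_neg {κ : ℝ} (huv : ∀ x, a ≤ x → HasDerivAt u (v x) x)
    (hv : ∀ x, a ≤ x → v x ≤ κ * -u x) {x : ℝ} (hx : a ≤ x) :
    Real.exp (κ * a) * -u a * Real.exp (-κ * x) ≤ -u x := by
  have hexp : ∀ y, HasDerivAt (fun y => Real.exp (κ * y)) (Real.exp (κ * y) * κ) y :=
    fun y => by simpa using ((hasDerivAt_id y).const_mul κ).exp
  have hmono : MonotoneOn (fun y => Real.exp (κ * y) * -u y) (Ici a) := by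
    refine monotoneOn_Ici_of_hasDerivAt_nonneg
      ((HasDerivAt.continuousOn fun y _ => hexp y).mul (HasDerivAt.continuousOn huv).neg)
      (fun y hy => (hexp y).mul (huv y hy.le).neg) fun y hy => ?_
    have := mul_nonneg (Real.exp_pos (κ * y)).le (sub_nonneg.2 (hv y hy.le))
    linarith
  calc Real.exp (κ * a) * -u a * Real.exp (-κ * x)
      ≤ Real.exp (κ * x) * -u x * Real.exp (-κ * x) :=
        mul_le_mul_of_nonneg_right (hmono self_mem_Ici hx hx) (Real.exp_pos _).le
    _ = -u x := by
      rw [mul_right_comm, ← Real.exp_add, neg_mul, add_neg_cancel, Real.exp_zero, one_mul]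

theorem exp_mul_neg_mul_exp_le_of_comparable {C : ℝ} (hC : 0 < C) (hw : ContinuousOn w (Ici a))
    (hwu : ∀ x, a < x → HasDerivAt w (u x) x) (huv : ∀ x, a ≤ x → HasDerivAt u (v x) x)
    (hcomp : ∀ x, a ≤ x → 1 / C * w x ≤ v x ∧ v x ≤ C * w x) (hw₀ : ∀ x, a ≤ x → 0 ≤ w x)
    (hu : ∀ x, a ≤ x → u x ≤ 0) (hwlim : Tendsto w atTop (𝓝 0))
    (hulim : Tendsto u atTop (𝓝 0)) {x : ℝ} (hx : a ≤ x) :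
    Real.exp (C * √C * a) * -u a * Real.exp (-(C * √C) * x) ≤ -u x := by
  have hwv : ∀ y, a ≤ y → w y ≤ C * v y := fun y hy => by
    have := (hcomp y hy).1
    rwa [one_div_mul_eq_div, div_le_iff₀' hC] at this
  refine exp_mul_neg_mul_exp_le_of_le_neg huv (fun y hy => ?_) hx
  calc v y ≤ C * w y := (hcomp y hy).2
    _ ≤ C * (√C * -u y) := by
      gcongr; exact le_sqrt_mul_neg_of_le_mul hC.le hw hwu huv hwv hu hwlim hulim hy (hw₀ y hy)
    _ = C * √C * -u y := by ring

end Decay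

/-- Integration step in the proof of Proposition 2.1: if w > 0 decays
exponentially and w'' is comparable to w, then −w' is positive and comparable
to exponentials. -/
theorem stmt_18 (m C r₀ : ℝ) (hm : 0 < m) (hC : 1 ≤ C)
    (w : ℝ → ℝ) (hw : ContDiffOn ℝ 2 w (Set.Ici r₀))
    (hpos : ∀ r, r₀ ≤ r → 0 < w r)
    (hcomp : ∀ r, r₀ ≤ r →
      (1 / C) * w r ≤ deriv (deriv w) r ∧ deriv (deriv w) r ≤ C * w r)
    (hdecay : ∀ r, r₀ ≤ r → w r ≤ C * Real.exp (-r / m)) :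
    (∀ r, r₀ ≤ r → 0 < -deriv w r) ∧
      ∃ C' : ℝ, 0 < C' ∧ ∃ κ₂ : ℝ, 0 < κ₂ ∧
        ∀ r, r₀ ≤ r →
          (1 / C') * Real.exp (-κ₂ * r) ≤ -deriv w r ∧
            -deriv w r ≤ C ^ 2 * m * Real.exp (-r / m) := by
  have hC0 : 0 < C := by linarith
  have hv : ∀ r, r₀ ≤ r → 0 < deriv (deriv w) r := fun r hr =>
    lt_of_lt_of_le (by have := hpos r hr; positivity) (hcomp r hr).1
  -- `w'' > 0` rules out the junk value `deriv (deriv w) r = 0`, so `w'` is differentiable at `r`.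
  have huv : ∀ r, r₀ ≤ r → HasDerivAt (deriv w) (deriv (deriv w) r) r := fun r hr =>
    (differentiableAt_of_deriv_ne_zero (hv r hr).ne').hasDerivAt
  have hwu : ∀ r, r₀ < r → HasDerivAt w (deriv w r) r := fun r hr =>
    ((hw.contDiffAt (Ici_mem_nhds hr)).differentiableAt two_ne_zero).hasDerivAt
  have hbound : ∀ r, r₀ ≤ r → w r ≤ C * Real.exp (-r₀ / m) := fun r hr =>
    (hdecay r hr).trans (by gcongr)
  have hmono : StrictMonoOn (deriv w) (Ici r₀) := strictMonoOn_Ici_of_hasDerivAt_pos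
    (HasDerivAt.continuousOn huv) (fun r hr => huv r hr.le) fun r hr => hv r hr.le
  have hneg : ∀ r, r₀ ≤ r → deriv w r < 0 := fun r hr =>
    neg_of_strictMonoOn_deriv_of_le hw.continuousOn hwu hmono hbound hr
  have hulim : Tendsto (deriv w) atTop (𝓝 0) := tendsto_zero_of_monotoneOn_deriv_of_bounded
    hw.continuousOn hwu hmono.monotoneOn (fun r hr => (hpos r hr).le) hbound
  have hwlim : Tendsto w atTop (𝓝 0) := by
    refine tendsto_of_tendsto_of_tendsto_of_le_of_le' tendsto_const_nhds
      (by simpa using (tendsto_exp_neg_div_atTop hm).const_mul C) ?_ ?_ <;>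
    filter_upwards [eventually_ge_atTop r₀] with r hr
    exacts [(hpos r hr).le, hdecay r hr]
  refine ⟨fun r hr => neg_pos.2 (hneg r hr), (Real.exp (C * √C * r₀) * -deriv w r₀)⁻¹,
    inv_pos.2 (mul_pos (Real.exp_pos _) (neg_pos.2 (hneg r₀ le_rfl))), C * √C, by positivity,
    fun r hr => ⟨?_, ?_⟩⟩
  · rw [one_div, inv_inv]
    exact exp_mul_neg_mul_exp_le_of_comparable hC0 hw.continuousOn hwu huv hcomp
      (fun s hs => (hpos s hs).le) (fun s hs => (hneg s hs).le) hwlim hulim hr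
  · exact neg_le_mul_exp_of_hasDerivAt_le hm huv
      (fun s hs => by nlinarith [(hcomp s hs).2, hdecay s hs]) hulim hr
end
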